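/- Let $\delta:\mathbb{N}\to\mathbb{R}_{\geq 0}$ be non-increasing and suppose a class of permissive $q$-spin systems exhibits strong spatial mixing with rate $\delta$. Then for every instance, every vertex $v$, every $\Lambda\subseteq V$, and any two partial configurations $\sigma,\tau\in[q]^\Lambda$ with disagreement distance $\ell = \min\{\mathrm{dist}_G(v,u): u\in\Lambda, \sigma_u\neq\tau_u\} \geq 2$, it holds for all $a\in[q]$ (with convention $0/0=1$) that $\min\left(\left|\frac{\mu_v^\sigma(a)}{\mu_v^\tau(a)}-1\right|,\,1\right) \leq 10\,q\,|S_{\lfloor\ell/2\rfloor}(v)|\,\delta(\lfloor\ell/2\rfloor)$. -/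

import Mathlib

open Finset

/-- `x` agrees with `σ` on the set `S`. -/
def agreeOn {V : Type*} {q : ℕ} (x σ : V → Fin q) (S : Finset V) : Prop :=
  ∀ v ∈ S, x v = σ v

instance {V : Type*} {q : ℕ} (σ : V → Fin q) (S : Finset V) (x : V → Fin q) :
    Decidable (agreeOn x σ S) :=
  inferInstanceAs (Decidable (∀ v ∈ S, x v = σ v))

/-- The conditional marginal probability, under the distribution `μ` on `[q]^V`, of the
event "agreeing with `τ` on `S`", conditioned on agreeing with `σ` on `Λ`
(with the convention `x/0 = 0`). -/
noncomputable def condP {V : Type*} {q : ℕ} [Fintype V] [DecidableEq V]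
    (μ : (V → Fin q) → ℝ) (Λ : Finset V) (σ : V → Fin q)
    (S : Finset V) (τ : V → Fin q) : ℝ :=
  (∑ x ∈ Finset.univ.filter (fun x : V → Fin q => agreeOn x σ Λ ∧ agreeOn x τ S), μ x) /
  (∑ x ∈ Finset.univ.filter (fun x : V → Fin q => agreeOn x σ Λ), μ x)

/-- The weight of a configuration `σ` in the spin system given by vertex activities `b`
and (symmetric) edge interaction matrices `A` on the graph `G`: the product of vertex
weights times the product over all edges of the edge weights. -/
noncomputable def gibbsW {V : Type*} {q : ℕ} [Fintype V] [LinearOrder V]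
    (G : SimpleGraph V) [DecidableRel G.Adj]
    (b : V → Fin q → ℝ) (A : V → V → Fin q → Fin q → ℝ) (σ : V → Fin q) : ℝ :=
  (∏ v, b v (σ v)) *
  ∏ p ∈ Finset.univ.filter (fun p : V × V => G.Adj p.1 p.2 ∧ p.1 < p.2),
    A p.1 p.2 (σ p.1) (σ p.2)

/-- The Gibbs distribution of the spin system `(G, [q], b, A)`. -/
noncomputable def gibbsMu {V : Type*} {q : ℕ} [Fintype V] [LinearOrder V]
    (G : SimpleGraph V) [DecidableRel G.Adj]
    (b : V → Fin q → ℝ) (A : V → V → Fin q → Fin q → ℝ) (σ : V → Fin q) : ℝ :=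
  gibbsW G b A σ / ∑ τ : V → Fin q, gibbsW G b A τ

/-!
Let `r = ⌊ℓ/2⌋` and let `T` be the unpinned part of the sphere `S_r(v)`. Pinning the spins `η`
on `T` separates `v` from all disagreements, so by the spatial Markov property
`p(η) := μ^σ(v = a | η) = μ^τ(v = a | η)`, and Bayes' rule gives `μ_v^σ(a) Q_σ(η) = P_σ(η) p(η)`,
where `P_σ` and `Q_σ` are the laws of `η` under `σ` without and with `v` pinned to `a`.
Telescoping strong spatial mixing over the sites of `T` bounds `‖P_σ - P_τ‖₁`, `‖Q_σ - P_σ‖₁` and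
`‖Q_τ - P_τ‖₁` by `2|T|δ(r)`. Hence some `η` has both `Q_σ/P_σ` and `Q_τ/P_τ` close to `1`,
and `μ_v^σ(a)/μ_v^τ(a) = (Q_τ/P_τ)/(Q_σ/P_σ)` at that `η`.
-/

section Agreement

variable {V : Type*} [DecidableEq V] {q : ℕ} {Λ S : Finset V} {σ τ x : V → Fin q} {u : V}

theorem agreeOn_insert_update (hu : u ∉ Λ) (c : Fin q) :
    agreeOn x (Function.update σ u c) (insert u Λ) ↔ x u = c ∧ agreeOn x σ Λ := by
  simp only [agreeOn, forall_mem_insert, Function.update_self]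
  refine and_congr_right fun _ => forall₂_congr fun w hw => ?_
  rw [Function.update_of_ne (ne_of_mem_of_not_mem hw hu)]

theorem agreeOn_union_piecewise (h : Disjoint Λ S) :
    agreeOn x (S.piecewise τ σ) (Λ ∪ S) ↔ agreeOn x σ Λ ∧ agreeOn x τ S := by
  simp only [agreeOn, mem_union, or_imp, forall_and]
  refine and_congr (forall₂_congr fun w hw => ?_) (forall₂_congr fun w hw => ?_)
  · rw [piecewise_eq_of_notMem _ _ _ (disjoint_left.mp h hw)]
  · rw [piecewise_eq_of_mem _ _ _ hw]

theorem agreeOn_piecewise_swap {I Δ : Finset V} {v : V} (hv : v ∈ I) {ξ₁ ξ₂ y : V → Fin q}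
    (hξ : ∀ w ∈ Δ, w ∈ I → ξ₁ w = ξ₂ w) {c : Fin q}
    (hx : agreeOn x (Function.update ξ₁ v c) (insert v Δ)) (hy : agreeOn y ξ₂ Δ) :
    agreeOn (I.piecewise x y) (Function.update ξ₂ v c) (insert v Δ) ∧
      agreeOn (I.piecewise y x) ξ₁ Δ := by
  constructor
  · intro w hw
    by_cases hwI : w ∈ I
    · rw [piecewise_eq_of_mem _ _ _ hwI, hx w hw]
      obtain rfl | hwv := eq_or_ne w v
      · simp
      · rw [Function.update_of_ne hwv, Function.update_of_ne hwv]
        exact hξ w (mem_of_mem_insert_of_ne hw hwv) hwI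
    · have hwv : w ≠ v := ne_of_mem_of_not_mem hv hwI |>.symm
      rw [piecewise_eq_of_notMem _ _ _ hwI, Function.update_of_ne hwv]
      exact hy w (mem_of_mem_insert_of_ne hw hwv)
  · intro w hw
    by_cases hwI : w ∈ I
    · rw [piecewise_eq_of_mem _ _ _ hwI, hy w hw, hξ w hw hwI]
    · have hwv : w ≠ v := ne_of_mem_of_not_mem hv hwI |>.symm
      rw [piecewise_eq_of_notMem _ _ _ hwI, hx w (mem_insert_of_mem hw),
        Function.update_of_ne hwv]

end Agreement

section PinnedSums

variable {V : Type*} [Fintype V] [DecidableEq V] {q : ℕ}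

def pinnedSum (μ : (V → Fin q) → ℝ) (Λ : Finset V) (σ : V → Fin q) : ℝ :=
  ∑ x ∈ univ.filter (fun x : V → Fin q => agreeOn x σ Λ), μ x

def Permissive (μ : (V → Fin q) → ℝ) : Prop :=
  ∀ Λ σ, 0 < pinnedSum μ Λ σ

def SpatialMixingAt (μ : (V → Fin q) → ℝ) (far : V → V → Prop) (ε : ℝ) : Prop :=
  ∀ u Λ (σ τ : V → Fin q), (∀ w ∈ Λ, σ w ≠ τ w → far u w) →
    (∑ a : Fin q, |condP μ Λ σ {u} (fun _ => a) - condP μ Λ τ {u} (fun _ => a)|) / 2 ≤ ε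

/-- Configurations on `T`, encoded as the full configurations that agree with `β` off `T`. -/
def configsOn (T : Finset V) (β : V → Fin q) : Finset (V → Fin q) :=
  univ.filter fun η => ∀ w ∉ T, η w = β w

variable {μ : (V → Fin q) → ℝ} {Λ S T : Finset V} {σ τ : V → Fin q} {u : V}

theorem pinnedSum_empty (μ : (V → Fin q) → ℝ) (σ : V → Fin q) :
    pinnedSum μ ∅ σ = ∑ x, μ x := by
  simp [pinnedSum, agreeOn]

theorem pinnedSum_eq_sum_update (μ : (V → Fin q) → ℝ) (hu : u ∉ Λ) (σ : V → Fin q) :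
    pinnedSum μ Λ σ = ∑ c, pinnedSum μ (insert u Λ) (Function.update σ u c) := by
  rw [pinnedSum, ← sum_fiberwise_of_maps_to (g := fun x => x u) (t := univ)
    (fun _ _ => mem_univ _)]
  refine sum_congr rfl fun c _ => ?_
  rw [pinnedSum, filter_filter]
  exact sum_congr (filter_congr fun x _ => by rw [agreeOn_insert_update hu, and_comm])
    fun _ _ => rfl

theorem condP_div_const (μ : (V → Fin q) → ℝ) {c : ℝ} (hc : c ≠ 0) :
    condP (fun x => μ x / c) = condP μ := by
  ext Λ σ S τ
  simp only [condP, ← sum_div, div_div_div_cancel_right₀ hc]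

theorem condP_eq_div (μ : (V → Fin q) → ℝ) (h : Disjoint Λ S) (σ τ : V → Fin q) :
    condP μ Λ σ S τ = pinnedSum μ (Λ ∪ S) (S.piecewise τ σ) / pinnedSum μ Λ σ := by
  rw [condP, pinnedSum, pinnedSum]
  congr 1
  exact sum_congr (filter_congr fun x _ => (agreeOn_union_piecewise h).symm) fun _ _ => rfl

theorem condP_singleton (μ : (V → Fin q) → ℝ) (hu : u ∉ Λ) (σ τ : V → Fin q) :
    condP μ Λ σ {u} τ =
      pinnedSum μ (insert u Λ) (Function.update σ u (τ u)) / pinnedSum μ Λ σ := by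
  rw [condP_eq_div μ (disjoint_singleton_right.mpr hu), union_singleton, piecewise_singleton]

theorem condP_singleton_of_mem (hu : u ∈ Λ) (hZ : pinnedSum μ Λ σ ≠ 0) (τ : V → Fin q) :
    condP μ Λ σ {u} τ = if σ u = τ u then 1 else 0 := by
  rw [condP]
  split_ifs with h
  · refine (div_eq_one_iff_eq hZ).mpr (sum_congr (filter_congr fun x _ => ?_) fun _ _ => rfl)
    refine and_iff_left_of_imp fun hx w hw => ?_
    rw [mem_singleton.mp hw, hx u hu, h]
  · rw [filter_false_of_mem fun x _ hx => h ?_, sum_empty, zero_div]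
    rw [← hx.1 u hu, hx.2 u (mem_singleton_self u)]

theorem condP_pos (hμ : Permissive μ) (h : Disjoint Λ S) (σ τ : V → Fin q) :
    0 < condP μ Λ σ S τ := by
  rw [condP_eq_div μ h]
  exact div_pos (hμ _ _) (hμ _ _)

theorem sum_condP_singleton (hμ : Permissive μ) (hu : u ∉ Λ) (σ : V → Fin q) :
    ∑ c, condP μ Λ σ {u} (fun _ => c) = 1 := by
  simp only [condP_singleton μ hu, ← sum_div, ← pinnedSum_eq_sum_update μ hu]
  exact div_self (hμ Λ σ).ne'

theorem condP_union (hμ : Permissive μ) (hT : Disjoint Λ T) (hS : Disjoint (Λ ∪ T) S)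
    (σ τ : V → Fin q) :
    condP μ Λ σ (T ∪ S) τ = condP μ Λ σ T τ * condP μ (Λ ∪ T) (T.piecewise τ σ) S τ := by
  have hTS : Disjoint Λ (T ∪ S) :=
    disjoint_union_right.mpr ⟨hT, disjoint_of_subset_left subset_union_left hS⟩
  have hpw : (T ∪ S).piecewise τ σ = S.piecewise τ (T.piecewise τ σ) := by
    ext w
    by_cases hw : w ∈ S <;> by_cases hw' : w ∈ T <;> simp [piecewise, hw, hw']
  rw [condP_eq_div μ hTS, condP_eq_div μ hT, condP_eq_div μ hS, ← union_assoc, hpw,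
    div_mul_div_cancel₀' (hμ _ _).ne']

theorem condP_insert (hμ : Permissive μ) (hu : u ∉ Λ) (huT : u ∉ T) (hT : Disjoint Λ T)
    (σ : V → Fin q) {c : Fin q} (hc : τ u = c) :
    condP μ Λ σ (insert u T) τ =
      condP μ Λ σ {u} (fun _ => c) * condP μ (insert u Λ) (Function.update σ u c) T τ := by
  have hΛu : Disjoint (Λ ∪ {u}) T := by
    rw [union_singleton, disjoint_insert_left]
    exact ⟨huT, hT⟩
  rw [insert_eq, condP_union hμ (disjoint_singleton_right.mpr hu) hΛu, union_singleton,
    piecewise_singleton, condP_singleton μ hu, condP_singleton μ hu, hc]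

theorem condP_eq_sum_mul (hμ : Permissive μ) {v : V} (hvΛ : v ∉ Λ) (hvT : v ∉ T)
    (hT : Disjoint Λ T) (σ τ : V → Fin q) :
    condP μ Λ σ T τ =
      ∑ c, condP μ Λ σ {v} (fun _ => c) * condP μ (insert v Λ) (Function.update σ v c) T τ := by
  have hvΛT : v ∉ Λ ∪ T := by simp [hvΛ, hvT]
  have hvT' : Disjoint (insert v Λ) T := disjoint_insert_left.mpr ⟨hvT, hT⟩
  rw [condP_eq_div μ hT, pinnedSum_eq_sum_update μ hvΛT, sum_div]
  refine sum_congr rfl fun c _ => ?_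
  rw [condP_singleton μ hvΛ, condP_eq_div μ hvT', div_mul_div_cancel₀' (hμ _ _).ne',
    insert_union, update_piecewise_of_notMem _ _ _ hvT]

theorem condP_singleton_mul_condP_insert (hμ : Permissive μ) {v : V} (hvΛ : v ∉ Λ) (hvT : v ∉ T)
    (hT : Disjoint Λ T) (ρ : V → Fin q) {η : V → Fin q} {a : Fin q} (hη : η v = a) :
    condP μ Λ ρ {v} (fun _ => a) * condP μ (insert v Λ) (Function.update ρ v a) T η =
      condP μ Λ ρ T η * condP μ (Λ ∪ T) (T.piecewise η ρ) {v} η := by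
  rw [← condP_insert hμ hvΛ hvT hT ρ hη, insert_eq, union_comm,
    condP_union hμ hT (disjoint_singleton_right.mpr (by simp [hvΛ, hvT]))]

theorem mem_configsOn {β η : V → Fin q} : η ∈ configsOn T β ↔ ∀ w ∉ T, η w = β w := by
  simp [configsOn]

theorem sum_condP_configsOn (hZ : pinnedSum μ Λ σ ≠ 0) (T : Finset V) (β : V → Fin q) :
    ∑ η ∈ configsOn T β, condP μ Λ σ T η = 1 := by
  simp only [condP, ← sum_div]
  refine (div_eq_one_iff_eq hZ).mpr ?_
  rw [pinnedSum, ← sum_fiberwise_of_maps_to (s := univ.filter fun x => agreeOn x σ Λ)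
    (g := fun x => T.piecewise x β) (t := configsOn T β)
    fun x _ => mem_configsOn.mpr fun w hw => piecewise_eq_of_notMem _ _ _ hw]
  refine sum_congr rfl fun η hη => sum_congr ?_ fun _ _ => rfl
  rw [filter_filter]
  refine filter_congr fun x _ => and_congr_right fun _ => ?_
  constructor
  · intro hx
    ext w
    by_cases hw : w ∈ T
    · rw [piecewise_eq_of_mem _ _ _ hw, hx w hw]
    · rw [piecewise_eq_of_notMem _ _ _ hw, mem_configsOn.mp hη w hw]
  · rintro rfl w hw
    rw [piecewise_eq_of_mem _ _ _ hw]

theorem sum_configsOn_insert (hu : u ∉ T) (β : V → Fin q) (f : (V → Fin q) → ℝ) :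
    ∑ η ∈ configsOn (insert u T) β, f η =
      ∑ c, ∑ η ∈ configsOn T (Function.update β u c), f η := by
  rw [← sum_fiberwise_of_maps_to (g := fun η => η u) (t := univ) fun _ _ => mem_univ _]
  refine sum_congr rfl fun c _ => sum_congr ?_ fun _ _ => rfl
  ext η
  simp only [mem_filter, mem_configsOn, mem_insert, not_or, and_imp]
  constructor
  · rintro ⟨h, rfl⟩ w hw
    by_cases hwu : w = u
    · subst hwu; simp
    · rw [Function.update_of_ne hwu, h w hwu hw]
  · intro h
    have hηu : η u = c := by simpa using h u hu
    refine ⟨fun w hwu hw => ?_, hηu⟩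
    rw [h w hw, Function.update_of_ne hwu]

end PinnedSums

theorem sum_abs_mul_sub_mul_le {ι : Type*} (s : Finset ι) {a₁ a₂ : ℝ} {b₁ b₂ : ι → ℝ}
    (ha : 0 ≤ a₁) (hb : ∀ i ∈ s, 0 ≤ b₂ i) (hb₁ : ∑ i ∈ s, b₂ i = 1) :
    ∑ i ∈ s, |a₁ * b₁ i - a₂ * b₂ i| ≤ a₁ * ∑ i ∈ s, |b₁ i - b₂ i| + |a₁ - a₂| := by
  calc ∑ i ∈ s, |a₁ * b₁ i - a₂ * b₂ i|
      ≤ ∑ i ∈ s, (a₁ * |b₁ i - b₂ i| + |a₁ - a₂| * b₂ i) := sum_le_sum fun i hi => by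
        calc |a₁ * b₁ i - a₂ * b₂ i| = |a₁ * (b₁ i - b₂ i) + (a₁ - a₂) * b₂ i| := by ring_nf
          _ ≤ |a₁ * (b₁ i - b₂ i)| + |(a₁ - a₂) * b₂ i| := abs_add_le _ _
          _ = a₁ * |b₁ i - b₂ i| + |a₁ - a₂| * b₂ i := by
            rw [abs_mul, abs_mul, abs_of_nonneg ha, abs_of_nonneg (hb i hi)]
    _ = a₁ * ∑ i ∈ s, |b₁ i - b₂ i| + |a₁ - a₂| := by
      rw [sum_add_distrib, ← mul_sum, ← mul_sum, hb₁, mul_one]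

theorem sum_abs_sub_sum_mul_le {ι κ : Type*} (s : Finset ι) (t : Finset κ) {w : κ → ℝ}
    (hw : ∀ c ∈ t, 0 ≤ w c) (hw₁ : ∑ c ∈ t, w c = 1) (f : ι → ℝ) (g : κ → ι → ℝ) {C : ℝ}
    (h : ∀ c ∈ t, ∑ i ∈ s, |f i - g c i| ≤ C) :
    ∑ i ∈ s, |f i - ∑ c ∈ t, w c * g c i| ≤ C := by
  have hmix : ∀ i, f i - ∑ c ∈ t, w c * g c i = ∑ c ∈ t, w c * (f i - g c i) := fun i => by
    simp only [mul_sub, sum_sub_distrib, ← sum_mul, hw₁, one_mul]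
  calc ∑ i ∈ s, |f i - ∑ c ∈ t, w c * g c i|
      ≤ ∑ i ∈ s, ∑ c ∈ t, w c * |f i - g c i| := sum_le_sum fun i _ => by
        rw [hmix]
        refine (abs_sum_le_sum_abs _ _).trans_eq (sum_congr rfl fun c hc => ?_)
        rw [abs_mul, abs_of_nonneg (hw c hc)]
    _ = ∑ c ∈ t, w c * ∑ i ∈ s, |f i - g c i| := by
      rw [sum_comm]
      simp only [mul_sum]
    _ ≤ ∑ c ∈ t, w c * C := sum_le_sum fun c hc => mul_le_mul_of_nonneg_left (h c hc) (hw c hc)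
    _ = C := by rw [← sum_mul, hw₁, one_mul]

theorem abs_div_sub_one_le_of_abs_sub_le {p₁ p₂ q₁ q₂ m₁ m₂ c : ℝ} (hp₁ : 0 < p₁) (hp₂ : 0 < p₂)
    (hc : c ≤ 1 / 4) (h₁ : |q₁ - p₁| ≤ c * p₁) (h₂ : |q₂ - p₂| ≤ c * p₂) (hm₂ : m₂ ≠ 0)
    (hm : q₁ * p₂ * m₁ = q₂ * p₁ * m₂) :
    |m₁ / m₂ - 1| ≤ 4 * c := by
  have hc₀ : 0 ≤ c := nonneg_of_mul_nonneg_left ((abs_nonneg _).trans h₁) hp₁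
  have hq₁ : 3 / 4 * p₁ ≤ q₁ := by nlinarith [neg_abs_le (q₁ - p₁)]
  have hden : 0 < q₁ * p₂ := mul_pos (by linarith) hp₂
  have hratio : m₁ / m₂ = q₂ * p₁ / (q₁ * p₂) := by
    rw [div_eq_div_iff hm₂ hden.ne']
    linear_combination hm
  have hnum : |q₂ * p₁ - q₁ * p₂| ≤ 2 * c * (p₁ * p₂) := by
    calc |q₂ * p₁ - q₁ * p₂| = |(q₂ - p₂) * p₁ - (q₁ - p₁) * p₂| := by ring_nf
      _ ≤ |q₂ - p₂| * p₁ + |q₁ - p₁| * p₂ := by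
        refine (abs_sub _ _).trans_eq ?_
        rw [abs_mul, abs_mul, abs_of_pos hp₁, abs_of_pos hp₂]
      _ ≤ c * p₂ * p₁ + c * p₁ * p₂ := by gcongr
      _ = 2 * c * (p₁ * p₂) := by ring
  rw [hratio, div_sub_one hden.ne', abs_div, abs_of_pos hden, div_le_iff₀ hden]
  nlinarith [mul_le_mul_of_nonneg_right hq₁ hp₂.le]

/-- Averaging against `P₁` finds an index at which both `Q₁ / P₁` and `Q₂ / P₂` are within `5K`
of `1`. -/
theorem abs_div_sub_one_le_of_sum_abs_sub_le {ι : Type*} {s : Finset ι} (hs : s.Nonempty)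
    {P₁ P₂ Q₁ Q₂ : ι → ℝ} (hP₁ : ∀ i ∈ s, 0 < P₁ i) (hP₂ : ∀ i ∈ s, 0 < P₂ i)
    (hsum : ∑ i ∈ s, P₁ i = 1) {K : ℝ} (hK : K ≤ 1 / 20)
    (hP : ∑ i ∈ s, |P₁ i - P₂ i| ≤ 2 * K) (hQ₁ : ∑ i ∈ s, |Q₁ i - P₁ i| ≤ 2 * K)
    (hQ₂ : ∑ i ∈ s, |Q₂ i - P₂ i| ≤ 2 * K) {m₁ m₂ : ℝ} (hm₂ : m₂ ≠ 0)
    (hm : ∀ i ∈ s, Q₁ i * P₂ i * m₁ = Q₂ i * P₁ i * m₂) :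
    |m₁ / m₂ - 1| ≤ 20 * K := by
  have hK₀ : 0 ≤ K := by nlinarith [sum_nonneg fun i (_ : i ∈ s) => abs_nonneg (P₁ i - P₂ i)]
  obtain ⟨i, hi, hgood⟩ := exists_le_of_sum_le hs
    (f := fun i => |Q₁ i - P₁ i| + |Q₂ i - P₂ i| + 5 * K * |P₁ i - P₂ i|)
    (g := fun i => 5 * K * P₁ i) (by
      rw [sum_add_distrib, sum_add_distrib, ← mul_sum, ← mul_sum, hsum]
      nlinarith)
  have hP₁P₂ : P₁ i ≤ P₂ i + |P₁ i - P₂ i| := by linarith [le_abs_self (P₁ i - P₂ i)]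
  have h₁ : |Q₁ i - P₁ i| ≤ 5 * K * P₁ i := by
    nlinarith [abs_nonneg (Q₂ i - P₂ i), abs_nonneg (P₁ i - P₂ i)]
  have h₂ : |Q₂ i - P₂ i| ≤ 5 * K * P₂ i := by
    nlinarith [abs_nonneg (Q₁ i - P₁ i), mul_le_mul_of_nonneg_left hP₁P₂ hK₀]
  have := abs_div_sub_one_le_of_abs_sub_le (hP₁ i hi) (hP₂ i hi) (by linarith) h₁ h₂ hm₂ (hm i hi)
  linarith

section Mixing

variable {V : Type*} [Fintype V] [DecidableEq V] {q : ℕ} {μ : (V → Fin q) → ℝ}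
  {far : V → V → Prop} {ε : ℝ}

/-- Telescoping over the sites of `T`: each site contributes one single-site mixing error. -/
theorem sum_abs_condP_sub_le (hμ : Permissive μ) (hssm : SpatialMixingAt μ far ε)
    (T : Finset V) :
    ∀ {Λ : Finset V} (β ρ₁ ρ₂ : V → Fin q), Disjoint Λ T →
      (∀ u ∈ T, ∀ w ∈ Λ, ρ₁ w ≠ ρ₂ w → far u w) →
      ∑ η ∈ configsOn T β, |condP μ Λ ρ₁ T η - condP μ Λ ρ₂ T η| ≤ 2 * #T * ε := by
  induction T using Finset.induction_on with
  | empty =>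
    intro Λ β ρ₁ ρ₂ _ _
    simp [condP_eq_div μ (disjoint_empty_right Λ), div_self (hμ _ _).ne']
  | @insert u T hu ih =>
    intro Λ β ρ₁ ρ₂ hT hfar
    have huΛ : u ∉ Λ := fun h => disjoint_left.mp hT h (mem_insert_self u T)
    have hT' : Disjoint Λ T := disjoint_of_subset_right (subset_insert u T) hT
    have huT : Disjoint (insert u Λ) T := disjoint_insert_left.mpr ⟨hu, hT'⟩
    have hsplit : ∀ ρ c, ∀ η ∈ configsOn T (Function.update β u c),
        condP μ Λ ρ (insert u T) η =
          condP μ Λ ρ {u} (fun _ => c) * condP μ (insert u Λ) (Function.update ρ u c) T η :=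
      fun ρ c η hη => condP_insert hμ huΛ hu hT' ρ (by simpa using mem_configsOn.mp hη u hu)
    have hfar' : ∀ c, ∀ u' ∈ T, ∀ w ∈ insert u Λ,
        Function.update ρ₁ u c w ≠ Function.update ρ₂ u c w → far u' w := by
      intro c u' hu' w hw hne
      have hwu : w ≠ u := by rintro rfl; simp at hne
      rw [Function.update_of_ne hwu, Function.update_of_ne hwu] at hne
      exact hfar u' (mem_insert_of_mem hu') w (mem_of_mem_insert_of_ne hw hwu) hne
    have hstep : ∀ c, ∑ η ∈ configsOn T (Function.update β u c),
        |condP μ Λ ρ₁ (insert u T) η - condP μ Λ ρ₂ (insert u T) η| ≤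
          condP μ Λ ρ₁ {u} (fun _ => c) * (2 * #T * ε) +
            |condP μ Λ ρ₁ {u} (fun _ => c) - condP μ Λ ρ₂ {u} (fun _ => c)| := by
      intro c
      refine (sum_congr rfl fun η hη => by rw [hsplit ρ₁ c η hη, hsplit ρ₂ c η hη]).trans_le <|
        (sum_abs_mul_sub_mul_le _ (condP_pos hμ (disjoint_singleton_right.mpr huΛ) _ _).le
          (fun η _ => (condP_pos hμ huT _ _).le) (sum_condP_configsOn (hμ _ _).ne' T _)).trans ?_
      gcongr
      · exact (condP_pos hμ (disjoint_singleton_right.mpr huΛ) _ _).le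
      · exact ih _ _ _ huT (hfar' c)
    have hu_mix := hssm u Λ ρ₁ ρ₂ (hfar u (mem_insert_self u T))
    calc _ = ∑ c, ∑ η ∈ configsOn T (Function.update β u c),
          |condP μ Λ ρ₁ (insert u T) η - condP μ Λ ρ₂ (insert u T) η| :=
        sum_configsOn_insert hu β _
      _ ≤ ∑ c, (condP μ Λ ρ₁ {u} (fun _ => c) * (2 * #T * ε) +
            |condP μ Λ ρ₁ {u} (fun _ => c) - condP μ Λ ρ₂ {u} (fun _ => c)|) :=
        sum_le_sum fun c _ => hstep c
      _ ≤ 2 * #(insert u T) * ε := by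
        rw [sum_add_distrib, ← sum_mul, sum_condP_singleton hμ huΛ, card_insert_of_notMem hu]
        push_cast
        linarith

/-- The marginal on `T` is a mixture, over the spin at `v`, of the marginals with `v` pinned. -/
theorem sum_abs_condP_insert_sub_le (hμ : Permissive μ) (hssm : SpatialMixingAt μ far ε)
    {Λ T : Finset V} {v : V} (hvΛ : v ∉ Λ) (hvT : v ∉ T) (hT : Disjoint Λ T)
    (hfar : ∀ u ∈ T, far u v) (β σ : V → Fin q) (a : Fin q) :
    ∑ η ∈ configsOn T β,
      |condP μ (insert v Λ) (Function.update σ v a) T η - condP μ Λ σ T η| ≤ 2 * #T * ε := by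
  simp only [condP_eq_sum_mul hμ hvΛ hvT hT σ]
  refine sum_abs_sub_sum_mul_le _ univ
    (fun c _ => (condP_pos hμ (disjoint_singleton_right.mpr hvΛ) _ _).le)
    (sum_condP_singleton hμ hvΛ σ) _ _ fun c _ => ?_
  refine sum_abs_condP_sub_le hμ hssm T _ _ _ (disjoint_insert_left.mpr ⟨hvT, hT⟩)
    fun u hu w hw hne => ?_
  obtain rfl | hw := mem_insert.mp hw
  · exact hfar u hu
  · have hwv : w ≠ v := fun h => hvΛ (h ▸ hw)
    simp [Function.update_of_ne hwv] at hne

end Mixing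

section Markov

variable {V : Type*} [Fintype V] [DecidableEq V] {q : ℕ}

/-- Once `Δ` pins `B \ I`, exchanging the parts inside `I` of a pair of configurations maps
pairs pinned by `(ξ₁[v ↦ c], ξ₂)` bijectively and weight-preservingly to pairs pinned by
`(ξ₂[v ↦ c], ξ₁)`. -/
theorem pinnedSum_update_mul_comm_of_factorization {μ F H : (V → Fin q) → ℝ} {I : Finset V}
    {B : Set V} (hμ : ∀ x, μ x = F x * H x) (hF : ∀ x y, (∀ w ∈ B, x w = y w) → F x = F y)
    (hH : ∀ x y, (∀ w ∉ I, x w = y w) → H x = H y) (hIB : ∀ w ∈ I, w ∈ B) {v : V} (hv : v ∈ I)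
    {Δ : Finset V} (hΔ : ∀ w ∈ B, w ∉ I → w ∈ Δ) {ξ₁ ξ₂ : V → Fin q}
    (hξ : ∀ w ∈ Δ, w ∈ B → ξ₁ w = ξ₂ w) (c : Fin q) :
    pinnedSum μ (insert v Δ) (Function.update ξ₁ v c) * pinnedSum μ Δ ξ₂ =
      pinnedSum μ (insert v Δ) (Function.update ξ₂ v c) * pinnedSum μ Δ ξ₁ := by
  have hξI : ∀ w ∈ Δ, w ∈ I → ξ₁ w = ξ₂ w := fun w hw hwI => hξ w hw (hIB w hwI)
  have hF_swap : ∀ x y, agreeOn x (Function.update ξ₁ v c) (insert v Δ) → agreeOn y ξ₂ Δ →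
      F (I.piecewise x y) = F x ∧ F (I.piecewise y x) = F y := by
    intro x y hx hy
    have hxy : ∀ w ∈ B, w ∉ I → x w = y w := fun w hwB hwI => by
      have hwv : w ≠ v := ne_of_mem_of_not_mem hv hwI |>.symm
      rw [hx w (mem_insert_of_mem (hΔ w hwB hwI)), Function.update_of_ne hwv,
        hy w (hΔ w hwB hwI), hξ w (hΔ w hwB hwI) hwB]
    refine ⟨hF _ _ fun w hwB => ?_, hF _ _ fun w hwB => ?_⟩ <;> by_cases hwI : w ∈ I <;>
      simp [piecewise_eq_of_mem, piecewise_eq_of_notMem, hwI, hxy w hwB]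
  have hH_swap : ∀ x y, H (I.piecewise x y) = H y :=
    fun x y => hH _ _ fun w hwI => piecewise_eq_of_notMem _ _ _ hwI
  have hinv : ∀ x y : V → Fin q, I.piecewise (I.piecewise x y) (I.piecewise y x) = x := by
    intro x y
    ext w
    by_cases hwI : w ∈ I <;> simp [hwI]
  simp only [pinnedSum, sum_mul_sum, ← sum_product']
  refine sum_nbij' (fun p => (I.piecewise p.1 p.2, I.piecewise p.2 p.1))
    (fun p => (I.piecewise p.1 p.2, I.piecewise p.2 p.1)) ?_ ?_ ?_ ?_ ?_
  · simp only [mem_product, mem_filter, mem_univ, true_and]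
    exact fun p hp => agreeOn_piecewise_swap hv hξI hp.1 hp.2
  · simp only [mem_product, mem_filter, mem_univ, true_and]
    exact fun p hp => agreeOn_piecewise_swap hv (fun w hw hwI => (hξI w hw hwI).symm) hp.1 hp.2
  · exact fun p _ => Prod.ext (hinv _ _) (hinv _ _)
  · exact fun p _ => Prod.ext (hinv _ _) (hinv _ _)
  · rintro ⟨x, y⟩ hp
    simp only [mem_product, mem_filter, mem_univ, true_and] at hp
    obtain ⟨hFx, hFy⟩ := hF_swap x y hp.1 hp.2
    simp only [hμ, hFx, hFy, hH_swap]
    ring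

end Markov

theorem SimpleGraph.edist_le_of_adj_of_lt {V : Type*} {G : SimpleGraph V} {v u w : V} {r : ℕ∞}
    (hadj : G.Adj u w) (hu : G.edist v u < r) : G.edist v w ≤ r :=
  SimpleGraph.edist_triangle.trans <| by
    rw [SimpleGraph.edist_eq_one_iff_adj.mpr hadj]
    exact Order.add_one_le_of_lt hu

theorem SimpleGraph.le_edist_of_add_le_edist {V : Type*} {G : SimpleGraph V} {v u w : V} {m n : ℕ}
    (h : ((m + n : ℕ) : ℕ∞) ≤ G.edist v w) (hu : G.edist v u = m) : (n : ℕ∞) ≤ G.edist u w := by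
  have h' := h.trans (SimpleGraph.edist_triangle (v := u))
  rw [hu, Nat.cast_add] at h'
  exact (WithTop.add_le_add_iff_left (ENat.natCast_ne_top m)).mp h'

section SpinSystem

variable {V : Type*} [Fintype V] [LinearOrder V] {q : ℕ}
  (G : SimpleGraph V) [DecidableRel G.Adj] (b : V → Fin q → ℝ) (A : V → V → Fin q → Fin q → ℝ)

theorem gibbsW_factorization (I : Finset V) :
    ∃ F H : (V → Fin q) → ℝ, (∀ x, gibbsW G b A x = F x * H x) ∧
      (∀ x y, (∀ w, (w ∈ I ∨ ∃ u ∈ I, G.Adj u w) → x w = y w) → F x = F y) ∧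
      (∀ x y, (∀ w ∉ I, x w = y w) → H x = H y) := by
  set E := univ.filter fun p : V × V => G.Adj p.1 p.2 ∧ p.1 < p.2
  refine ⟨fun x => (∏ w ∈ I, b w (x w)) *
      ∏ p ∈ E.filter (fun p => p.1 ∈ I ∨ p.2 ∈ I), A p.1 p.2 (x p.1) (x p.2),
    fun x => (∏ w ∈ Iᶜ, b w (x w)) *
      ∏ p ∈ E.filter (fun p => ¬(p.1 ∈ I ∨ p.2 ∈ I)), A p.1 p.2 (x p.1) (x p.2),
    fun x => ?_, fun x y hxy => ?_, fun x y hxy => ?_⟩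
  · rw [mul_mul_mul_comm, prod_mul_prod_compl, prod_filter_mul_prod_filter_not]
    rfl
  · refine congr_arg₂ _ (prod_congr rfl fun w hw => by rw [hxy w (.inl hw)])
      (prod_congr rfl fun p hp => ?_)
    obtain ⟨hpE, hpI⟩ := mem_filter.mp hp
    have hadj : G.Adj p.1 p.2 := (mem_filter.mp hpE).2.1
    have h₁ : p.1 ∈ I ∨ ∃ u ∈ I, G.Adj u p.1 := hpI.imp_right fun h => ⟨_, h, hadj.symm⟩
    have h₂ : p.2 ∈ I ∨ ∃ u ∈ I, G.Adj u p.2 := hpI.symm.imp_right fun h => ⟨_, h, hadj⟩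
    rw [hxy _ h₁, hxy _ h₂]
  · refine congr_arg₂ _ (prod_congr rfl fun w hw => by rw [hxy w (mem_compl.mp hw)])
      (prod_congr rfl fun p hp => ?_)
    obtain ⟨h₁, h₂⟩ := not_or.mp (mem_filter.mp hp).2
    rw [hxy _ h₁, hxy _ h₂]

variable {G b A}

theorem condP_gibbsW_congr (hμ : Permissive (gibbsW G b A)) {I Δ : Finset V} {v : V}
    (hvI : v ∈ I) (hvΔ : v ∉ Δ) (hΔ : ∀ u ∈ I, ∀ w, G.Adj u w → w ∉ I → w ∈ Δ)
    {ξ₁ ξ₂ : V → Fin q} (hξ : ∀ w ∈ Δ, (w ∈ I ∨ ∃ u ∈ I, G.Adj u w) → ξ₁ w = ξ₂ w)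
    (τ : V → Fin q) :
    condP (gibbsW G b A) Δ ξ₁ {v} τ = condP (gibbsW G b A) Δ ξ₂ {v} τ := by
  obtain ⟨F, H, hW, hF, hH⟩ := gibbsW_factorization G b A I
  rw [condP_singleton _ hvΔ, condP_singleton _ hvΔ, div_eq_div_iff (hμ _ _).ne' (hμ _ _).ne']
  refine pinnedSum_update_mul_comm_of_factorization (B := {w | w ∈ I ∨ ∃ u ∈ I, G.Adj u w})
    hW hF hH (fun w hw => .inl hw) hvI (fun w hwB hwI => ?_) hξ (τ v)
  obtain hw | ⟨u, hu, hadj⟩ := hwB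
  · exact absurd hw hwI
  · exact hΔ u hu w hadj hwI

theorem condP_gibbsW_congr_of_sphere (hμ : Permissive (gibbsW G b A)) {r : ℕ} (hr : 1 ≤ r)
    {v : V} {Δ : Finset V} (hvΔ : v ∉ Δ) (hΔ : ∀ w, G.edist v w = r → w ∈ Δ)
    {ξ₁ ξ₂ : V → Fin q} (hξ : ∀ w ∈ Δ, G.edist v w ≤ r → ξ₁ w = ξ₂ w) (τ : V → Fin q) :
    condP (gibbsW G b A) Δ ξ₁ {v} τ = condP (gibbsW G b A) Δ ξ₂ {v} τ := by
  have hr₀ : (0 : ℕ∞) < r := by exact_mod_cast hr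
  have hball : ∀ {u w}, u ∈ univ.filter (fun w => G.edist v w < r) → G.Adj u w →
      G.edist v w ≤ r := fun hu hadj =>
    SimpleGraph.edist_le_of_adj_of_lt hadj (mem_filter.mp hu).2
  refine condP_gibbsW_congr hμ (I := univ.filter fun w => G.edist v w < r)
    (by simpa using hr₀) hvΔ (fun u hu w hadj hwI => hΔ w ?_) (fun w hw hwB => hξ w hw ?_) τ
  · exact le_antisymm (hball hu hadj) (by simpa using hwI)
  · obtain hwI | ⟨u, hu, hadj⟩ := hwB
    · exact (mem_filter.mp hwI).2.le
    · exact hball hu hadj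

theorem condP_gibbsW_piecewise_congr (hμ : Permissive (gibbsW G b A)) {r : ℕ} (hr : 1 ≤ r)
    {v : V} {Λ T : Finset V} (hvΛ : v ∉ Λ) (hvT : v ∉ T) {σ τ : V → Fin q}
    (hdist : ∀ u ∈ Λ, σ u ≠ τ u → (r : ℕ∞) < G.edist v u)
    (hsphere : ∀ w, G.edist v w = r → w ∈ Λ ∪ T) (η : V → Fin q) :
    condP (gibbsW G b A) (Λ ∪ T) (T.piecewise η σ) {v} η =
      condP (gibbsW G b A) (Λ ∪ T) (T.piecewise η τ) {v} η := by
  refine condP_gibbsW_congr_of_sphere hμ hr (by simp [hvΛ, hvT]) hsphere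
    (fun w hw hwr => ?_) η
  by_cases hwT : w ∈ T
  · simp [hwT]
  · rw [piecewise_eq_of_notMem _ _ _ hwT, piecewise_eq_of_notMem _ _ _ hwT]
    by_contra hne
    exact (hdist w ((mem_union.mp hw).resolve_right hwT) hne).not_ge hwr

theorem abs_condP_div_condP_sub_one_le (hμ : Permissive (gibbsW G b A)) {r : ℕ} {ε : ℝ}
    (hssm : SpatialMixingAt (gibbsW G b A) (fun u w => (r : ℕ∞) ≤ G.edist u w) ε)
    (hε : 0 ≤ ε) (hr : 1 ≤ r) {v : V} {Λ : Finset V} (hvΛ : v ∉ Λ) {σ τ : V → Fin q}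
    (hdist : ∀ u ∈ Λ, σ u ≠ τ u → ((2 * r : ℕ) : ℕ∞) ≤ G.edist v u)
    (hK : ({u | G.edist v u = r} : Set V).ncard * ε ≤ 1 / 20) (a : Fin q) :
    |condP (gibbsW G b A) Λ σ {v} (fun _ => a) / condP (gibbsW G b A) Λ τ {v} (fun _ => a) - 1|
      ≤ 20 * (({u | G.edist v u = r} : Set V).ncard * ε) := by
  set T := univ.filter fun u => G.edist v u = r ∧ u ∉ Λ
  have hr₀ : (0 : ℕ∞) < r := by exact_mod_cast hr
  have hvT : v ∉ T := by simp [T, hr₀.ne]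
  have hT : Disjoint Λ T := disjoint_right.mpr fun u hu => (mem_filter.mp hu).2.2
  have hTcard : (#T : ℝ) * ε ≤ ({u | G.edist v u = r} : Set V).ncard * ε := by
    gcongr
    rw [← Set.ncard_coe_finset]
    exact_mod_cast Set.ncard_le_ncard fun u (hu : u ∈ T) => (mem_filter.mp hu).2.1
  have hfar_v : ∀ u ∈ T, (r : ℕ∞) ≤ G.edist u v := fun u hu => by
    rw [SimpleGraph.edist_comm, (mem_filter.mp hu).2.1]
  have hfar_Λ : ∀ u ∈ T, ∀ w ∈ Λ, σ w ≠ τ w → (r : ℕ∞) ≤ G.edist u w := fun u hu w hw hne =>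
    SimpleGraph.le_edist_of_add_le_edist (by simpa [two_mul] using hdist w hw hne)
      (mem_filter.mp hu).2.1
  have hmarkov := condP_gibbsW_piecewise_congr hμ hr hvΛ hvT
    (fun w hw hne => lt_of_lt_of_le (by exact_mod_cast (by omega : r < 2 * r)) (hdist w hw hne))
    (fun w hw => by by_cases hwΛ : w ∈ Λ <;> simp [T, hw, hwΛ])
  set β := Function.update σ v a
  have hηv : ∀ η ∈ configsOn T β, η v = a := fun η hη => by
    simpa [β] using mem_configsOn.mp hη v hvT
  have hbayes := fun ρ η (hη : η ∈ configsOn T β) =>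
    condP_singleton_mul_condP_insert hμ hvΛ hvT hT ρ (hηv η hη)
  have hmix := fun ρ => sum_abs_condP_insert_sub_le hμ hssm hvΛ hvT hT hfar_v β ρ a
  refine (abs_div_sub_one_le_of_sum_abs_sub_le ⟨β, mem_configsOn.mpr fun _ _ => rfl⟩
    (fun η _ => condP_pos hμ hT σ η) (fun η _ => condP_pos hμ hT τ η)
    (sum_condP_configsOn (hμ _ _).ne' T β) (hK.trans' (by linarith))
    ((sum_abs_condP_sub_le hμ hssm T β σ τ hT hfar_Λ).trans_eq (mul_assoc _ _ _))
    ((hmix σ).trans_eq (mul_assoc _ _ _)) ((hmix τ).trans_eq (mul_assoc _ _ _))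
    (condP_pos hμ (disjoint_singleton_right.mpr hvΛ) τ _).ne' fun η hη => ?_).trans (by linarith)
  linear_combination condP (gibbsW G b A) Λ τ T η * hbayes σ η hη -
    condP (gibbsW G b A) Λ σ T η * hbayes τ η hη +
    condP (gibbsW G b A) Λ σ T η * condP (gibbsW G b A) Λ τ T η * hmarkov η

end SpinSystem

theorem stmt14_general {V : Type*} [Fintype V] [LinearOrder V] {q : ℕ}
    (G : SimpleGraph V) [DecidableRel G.Adj]
    (b : V → Fin q → ℝ) (A : V → V → Fin q → Fin q → ℝ)
    (hperm : ∀ (Λ : Finset V) (σ : V → Fin q),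
      0 < ∑ x ∈ Finset.univ.filter (fun x : V → Fin q => agreeOn x σ Λ), gibbsW G b A x)
    (δ : ℕ → ℝ) (hδ0 : ∀ ℓ, 0 ≤ δ ℓ)
    (hSSM : ∀ (v : V) (Λ : Finset V) (σ τ : V → Fin q) (ℓ : ℕ),
      (∀ u ∈ Λ, σ u ≠ τ u → (ℓ : ℕ∞) ≤ G.edist v u) →
      (∑ a : Fin q, |condP (gibbsMu G b A) Λ σ {v} (fun _ => a) -
          condP (gibbsMu G b A) Λ τ {v} (fun _ => a)|) / 2 ≤ δ ℓ) :
    ∀ (v : V) (Λ : Finset V) (σ τ : V → Fin q) (ℓ : ℕ), 2 ≤ ℓ →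
      (∀ u ∈ Λ, σ u ≠ τ u → (ℓ : ℕ∞) ≤ G.edist v u) →
      ∀ a : Fin q,
        (condP (gibbsMu G b A) Λ σ {v} (fun _ => a) = 0 ↔
          condP (gibbsMu G b A) Λ τ {v} (fun _ => a) = 0) ∧
        (condP (gibbsMu G b A) Λ τ {v} (fun _ => a) ≠ 0 →
          min |condP (gibbsMu G b A) Λ σ {v} (fun _ => a) /
                condP (gibbsMu G b A) Λ τ {v} (fun _ => a) - 1| 1 ≤
            10 * (q : ℝ) * (({u : V | G.edist v u = ((ℓ / 2 : ℕ) : ℕ∞)} : Set V).ncard : ℝ) *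
              δ (ℓ / 2)) := by
  intro v Λ σ τ ℓ hℓ hdist a
  have hμ : Permissive (gibbsW G b A) := hperm
  have hZ : ∑ x, gibbsW G b A x ≠ 0 := (pinnedSum_empty (gibbsW G b A) σ ▸ hμ ∅ σ).ne'
  rw [show condP (gibbsMu G b A) = condP (gibbsW G b A) from condP_div_const _ hZ] at hSSM ⊢
  set N : ℝ := (({u : V | G.edist v u = ((ℓ / 2 : ℕ) : ℕ∞)} : Set V).ncard : ℝ)
  have hR : 0 ≤ 10 * (q : ℝ) * N * δ (ℓ / 2) := by have := hδ0 (ℓ / 2); positivity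
  -- The main bound is `20 |S| δ`, absorbed by `10 q |S| δ` only when `q ≥ 2`; if `q = 1`, `σ = τ`.
  by_cases hdeg : q = 1 ∨ v ∈ Λ
  · have heq : condP (gibbsW G b A) Λ σ {v} (fun _ => a) =
        condP (gibbsW G b A) Λ τ {v} (fun _ => a) := by
      obtain rfl | hvΛ := hdeg
      · rw [Subsingleton.elim σ τ]
      · have hστ : σ v = τ v := by_contra fun hne => by
          have := hdist v hvΛ hne
          simp at this
          omega
        rw [condP_singleton_of_mem hvΛ (hμ _ _).ne', condP_singleton_of_mem hvΛ (hμ _ _).ne', hστ]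
    rw [heq]
    exact ⟨Iff.rfl, fun h => by simpa [div_self h] using hR⟩
  obtain ⟨hq, hvΛ⟩ := not_or.mp hdeg
  have hμv := fun ρ => condP_pos hμ (disjoint_singleton_right.mpr hvΛ) ρ (fun _ => a)
  refine ⟨iff_of_false (hμv σ).ne' (hμv τ).ne', fun _ => ?_⟩
  rcases le_or_gt 1 (10 * (q : ℝ) * N * δ (ℓ / 2)) with h1 | h1
  · exact (min_le_right _ _).trans h1
  have hq2 : (2 : ℝ) ≤ q := by exact_mod_cast (by have := a.pos; omega : 2 ≤ q)
  refine (min_le_left _ _).trans <| (abs_condP_div_condP_sub_one_le hμ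
    (fun u Λ σ τ h => hSSM u Λ σ τ (ℓ / 2) h) (hδ0 _) (by omega) hvΛ
    (fun u hu hne => (hdist u hu hne).trans' (by exact_mod_cast Nat.mul_div_le ℓ 2))
    (by nlinarith [hδ0 (ℓ / 2)]) a).trans ?_
  nlinarith [hδ0 (ℓ / 2)]

/-- a permissive spin system with strong spatial mixing at a non-increasing
rate `δ` satisfies the multiplicative ratio bound: whenever every disagreement of `σ, τ` is
at distance at least `ℓ ≥ 2` from `v`, for every spin `a` (with the `0/0 = 1` convention,
expressed here via equality of supports plus the bound on the ratio whenever it is defined)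
`min(|μ_v^σ(a)/μ_v^τ(a) - 1|, 1) ≤ 10 q |S_{⌊ℓ/2⌋}(v)| δ(⌊ℓ/2⌋)`. -/
theorem stmt14 {V : Type*} [Fintype V] [LinearOrder V] {q : ℕ}
    (G : SimpleGraph V) [DecidableRel G.Adj]
    (b : V → Fin q → ℝ) (A : V → V → Fin q → Fin q → ℝ)
    (hb : ∀ v a, 0 ≤ b v a) (hA0 : ∀ u v a c, 0 ≤ A u v a c)
    (hsym : ∀ u v a c, A u v a c = A v u c a)
    (hperm : ∀ (Λ : Finset V) (σ : V → Fin q),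
      0 < ∑ x ∈ Finset.univ.filter (fun x : V → Fin q => agreeOn x σ Λ), gibbsW G b A x)
    (δ : ℕ → ℝ) (hδ0 : ∀ ℓ, 0 ≤ δ ℓ) (hδmono : ∀ k l, k ≤ l → δ l ≤ δ k)
    (hSSM : ∀ (v : V) (Λ : Finset V) (σ τ : V → Fin q) (ℓ : ℕ),
      (∀ u ∈ Λ, σ u ≠ τ u → (ℓ : ℕ∞) ≤ G.edist v u) →
      (∑ a : Fin q, |condP (gibbsMu G b A) Λ σ {v} (fun _ => a) -
          condP (gibbsMu G b A) Λ τ {v} (fun _ => a)|) / 2 ≤ δ ℓ) :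
    ∀ (v : V) (Λ : Finset V) (σ τ : V → Fin q) (ℓ : ℕ), 2 ≤ ℓ →
      (∀ u ∈ Λ, σ u ≠ τ u → (ℓ : ℕ∞) ≤ G.edist v u) →
      ∀ a : Fin q,
        (condP (gibbsMu G b A) Λ σ {v} (fun _ => a) = 0 ↔
          condP (gibbsMu G b A) Λ τ {v} (fun _ => a) = 0) ∧
        (condP (gibbsMu G b A) Λ τ {v} (fun _ => a) ≠ 0 →
          min |condP (gibbsMu G b A) Λ σ {v} (fun _ => a) /
                condP (gibbsMu G b A) Λ τ {v} (fun _ => a) - 1| 1 ≤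
            10 * (q : ℝ) * (({u : V | G.edist v u = ((ℓ / 2 : ℕ) : ℕ∞)} : Set V).ncard : ℝ) *
              δ (ℓ / 2)) :=
  stmt14_general G b A hperm δ hδ0 hSSM
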